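/- arXiv:1906.04738 — 2 statements merged into one kernel-verified Lean document; each statement's English description precedes it below -/
import Mathlib

section
/- With the same hypotheses, if additionally (a v' + b u')(s) ≠ 0 and κ(s) > 0 at a point s, then ⟨ᾱ(s), T̄⟩ = ⟨α(s), T⟩ if and only if μ(s) = 0 or κ̄_n(s) = κ_n(s). In particular, if the component along every tangent vector is invariant and μ(s) ≠ 0, the normal curvature is invariant. -/
open scoped RealInnerProductSpace

noncomputable section

abbrev E3 : Type := EuclideanSpace ℝ (Fin 3)

/-- Cross product on `E3`. -/
def cross3 (x y : E3) : E3 :=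
  (WithLp.equiv 2 (Fin 3 → ℝ)).symm
    (crossProduct ((WithLp.equiv 2 (Fin 3 → ℝ)) x) ((WithLp.equiv 2 (Fin 3 → ℝ)) y))

/-- Partial derivative in the first variable. -/
def pdu {α : Type*} [NormedAddCommGroup α] [NormedSpace ℝ α]
    (f : ℝ → ℝ → α) (p q : ℝ) : α := deriv (fun x => f x q) p

/-- Partial derivative in the second variable. -/
def pdv {α : Type*} [NormedAddCommGroup α] [NormedSpace ℝ α]
    (f : ℝ → ℝ → α) (p q : ℝ) : α := deriv (fun y => f p y) q

/-- First fundamental form coefficients. -/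
def fE (φ : ℝ → ℝ → E3) (p q : ℝ) : ℝ := ⟪pdu φ p q, pdu φ p q⟫
def fF (φ : ℝ → ℝ → E3) (p q : ℝ) : ℝ := ⟪pdu φ p q, pdv φ p q⟫
def fG (φ : ℝ → ℝ → E3) (p q : ℝ) : ℝ := ⟪pdv φ p q, pdv φ p q⟫

/-- Unit surface normal. -/
def Nvec (φ : ℝ → ℝ → E3) (p q : ℝ) : E3 :=
  ‖cross3 (pdu φ p q) (pdv φ p q)‖⁻¹ • cross3 (pdu φ p q) (pdv φ p q)

theorem eq_iff_eq_zero_or_eq_of_sub_eq {K : Type*} [Field K] {x y m k p q c : K}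
    (h : x - y = m / k * (p - q) * c) (hk : k ≠ 0) (hc : c ≠ 0) :
    x = y ↔ m = 0 ∨ p = q := by
  rw [← sub_eq_zero, h]
  simp only [mul_eq_zero, div_eq_zero_iff, sub_eq_zero, hk, hc, or_false]

/-- invariance of the tangential component holds iff `μ = 0` or
the normal curvature is invariant; in particular invariance along every tangent
vector with `μ ≠ 0` forces `κ̄_n = κ_n`. -/
theorem stmt10 (φ ψ : ℝ → ℝ → E3) (u v : ℝ → ℝ) (α β : ℝ → E3)
    (κ mu kn kn' : ℝ → ℝ) (s : ℝ)
    (hform : ∀ a b : ℝ,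
      ⟪β s, a • pdu ψ (u s) (v s) + b • pdv ψ (u s) (v s)⟫ -
        ⟪α s, a • pdu φ (u s) (v s) + b • pdv φ (u s) (v s)⟫ =
        (mu s / κ s) * (kn' s - kn s) * (a * deriv v s + b * deriv u s))
    (hκ : 0 < κ s) (a b : ℝ)
    (hab : a * deriv v s + b * deriv u s ≠ 0) :
    (⟪β s, a • pdu ψ (u s) (v s) + b • pdv ψ (u s) (v s)⟫ =
        ⟪α s, a • pdu φ (u s) (v s) + b • pdv φ (u s) (v s)⟫ ↔
      (mu s = 0 ∨ kn' s = kn s)) ∧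
    ((∀ a' b' : ℝ, ⟪β s, a' • pdu ψ (u s) (v s) + b' • pdv ψ (u s) (v s)⟫ =
        ⟪α s, a' • pdu φ (u s) (v s) + b' • pdv φ (u s) (v s)⟫) →
      mu s ≠ 0 → kn' s = kn s) := by
  have key := eq_iff_eq_zero_or_eq_of_sub_eq (hform a b) hκ.ne' hab
  exact ⟨key, fun hall hmu => (key.mp (hall a b)).resolve_left hmu⟩
end
end

section
/- Let φ, φ̄ be smooth regular parametrized surfaces with equal first fundamental forms and α, ᾱ corresponding unit speed normal curves with κ > 0 and coefficients λ, μ. Then the components along the respective unit surface normals satisfy ⟨ᾱ, N̄⟩ − ⟨α, N⟩ = (λ/κ)(κ̄_n − κ_n). -/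
open scoped RealInnerProductSpace

noncomputable section

lemma cross3_smul_right (c : ℝ) (x y : E3) : cross3 x (c • y) = c • cross3 x y := by
  simp [cross3]

lemma lagrange (a b c d : E3) :
    ⟪cross3 a b, cross3 c d⟫ = ⟪a,c⟫ * ⟪b,d⟫ - ⟪a,d⟫ * ⟪b,c⟫ := by
  simp only [cross3, cross_apply, PiLp.inner_apply, Fin.sum_univ_three,
    WithLp.equiv_symm_apply, WithLp.equiv_apply, WithLp.ofLp_toLp, RCLike.inner_apply, conj_trivial,
    Matrix.cons_val_zero, Matrix.cons_val_one, Matrix.head_cons, Matrix.cons_val_two,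
    Matrix.tail_cons]
  ring

lemma key (U : Set (ℝ × ℝ)) (hU : IsOpen U) (φ : ℝ → ℝ → E3)
    (hφ : ContDiffOn ℝ (⊤ : ℕ∞) (fun p : ℝ × ℝ => φ p.1 p.2) U)
    (u v : ℝ → ℝ) (hu : ContDiff ℝ (⊤ : ℕ∞) u) (hv : ContDiff ℝ (⊤ : ℕ∞) v)
    (hmem : ∀ s : ℝ, (u s, v s) ∈ U) (s : ℝ) :
    ⟪deriv (fun t => φ (u t) (v t)) s, pdu φ (u s) (v s)⟫ =
      deriv u s * fE φ (u s) (v s) + deriv v s * fF φ (u s) (v s) ∧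
    ⟪deriv (fun t => φ (u t) (v t)) s, pdv φ (u s) (v s)⟫ =
      deriv u s * fF φ (u s) (v s) + deriv v s * fG φ (u s) (v s) ∧
    ⟪deriv (deriv (fun t => φ (u t) (v t))) s, pdu φ (u s) (v s)⟫ =
      deriv (deriv u) s * fE φ (u s) (v s) + deriv (deriv v) s * fF φ (u s) (v s)
      + (deriv u s)^2 * (fderiv ℝ (fun q : ℝ × ℝ => fE φ q.1 q.2) (u s, v s) (1, 0)) / 2
      + deriv u s * deriv v s * (fderiv ℝ (fun q : ℝ × ℝ => fE φ q.1 q.2) (u s, v s) (0, 1))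
      + (deriv v s)^2 * ((fderiv ℝ (fun q : ℝ × ℝ => fF φ q.1 q.2) (u s, v s) (0, 1))
          - (fderiv ℝ (fun q : ℝ × ℝ => fG φ q.1 q.2) (u s, v s) (1, 0)) / 2) ∧
    ⟪deriv (deriv (fun t => φ (u t) (v t))) s, pdv φ (u s) (v s)⟫ =
      deriv (deriv u) s * fF φ (u s) (v s) + deriv (deriv v) s * fG φ (u s) (v s)
      + (deriv u s)^2 * ((fderiv ℝ (fun q : ℝ × ℝ => fF φ q.1 q.2) (u s, v s) (1, 0))
          - (fderiv ℝ (fun q : ℝ × ℝ => fE φ q.1 q.2) (u s, v s) (0, 1)) / 2)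
      + deriv u s * deriv v s * (fderiv ℝ (fun q : ℝ × ℝ => fG φ q.1 q.2) (u s, v s) (1, 0))
      + (deriv v s)^2 * (fderiv ℝ (fun q : ℝ × ℝ => fG φ q.1 q.2) (u s, v s) (0, 1)) / 2 := by
  have hΦ : ContDiffOn ℝ (⊤ : ℕ∞) (fun p : ℝ × ℝ => φ p.1 p.2) U := hφ
  set Φ : ℝ × ℝ → E3 := fun p : ℝ × ℝ => φ p.1 p.2 with hΦdef
  set F1 : ℝ × ℝ → (ℝ × ℝ →L[ℝ] E3) := fderiv ℝ Φ with hF1def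
  have hd : ∀ p ∈ U, HasFDerivAt Φ (F1 p) p := fun p hp =>
    ((hΦ.contDiffAt (hU.mem_nhds hp)).differentiableAt (by simp)).hasFDerivAt
  have hF1cd : ContDiffOn ℝ (⊤ : ℕ∞) F1 U := hΦ.fderiv_of_isOpen hU (by simp)
  have hdF1 : ∀ p ∈ U, HasFDerivAt F1 (fderiv ℝ F1 p) p := fun p hp =>
    ((hF1cd.contDiffAt (hU.mem_nhds hp)).differentiableAt (by simp)).hasFDerivAt
  -- partial derivatives
  have hpdu : ∀ x y : ℝ, (x, y) ∈ U → pdu φ x y = F1 (x, y) (1, 0) := by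
    intro x y hp
    have h1 : HasDerivAt (fun t : ℝ => (t, y)) ((1:ℝ), (0:ℝ)) x :=
      (hasDerivAt_id _).prodMk (hasDerivAt_const _ _)
    exact ((hd _ hp).comp_hasDerivAt x h1).deriv
  have hpdv : ∀ x y : ℝ, (x, y) ∈ U → pdv φ x y = F1 (x, y) (0, 1) := by
    intro x y hp
    have h1 : HasDerivAt (fun t : ℝ => (x, t)) ((0:ℝ), (1:ℝ)) y :=
      (hasDerivAt_const _ _).prodMk (hasDerivAt_id _)
    exact ((hd _ hp).comp_hasDerivAt y h1).deriv
  -- curve derivatives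
  have hγ : ∀ t : ℝ, HasDerivAt (fun t => (u t, v t)) (deriv u t, deriv v t) t := fun t =>
    ((hu.differentiable (by simp) t).hasDerivAt).prodMk ((hv.differentiable (by simp) t).hasDerivAt)
  have hα1 : ∀ t : ℝ, HasDerivAt (fun t => φ (u t) (v t))
      (F1 (u t, v t) (deriv u t, deriv v t)) t :=
    fun t => by have := (hd (u t, v t) (hmem t)).comp_hasDerivAt t (hγ t); exact this
  have hα1' : deriv (fun t => φ (u t) (v t)) = fun t => F1 (u t, v t) (deriv u t, deriv v t) :=
    funext fun t => (hα1 t).deriv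
  have hu' : Differentiable ℝ (deriv u) :=
    ((contDiff_infty_iff_deriv.mp (hu.of_le (by simp))).2).differentiable (by simp)
  have hv' : Differentiable ℝ (deriv v) :=
    ((contDiff_infty_iff_deriv.mp (hv.of_le (by simp))).2).differentiable (by simp)
  have hw : HasDerivAt (fun t => (deriv u t, deriv v t))
      (deriv (deriv u) s, deriv (deriv v) s) s :=
    ((hu' s).hasDerivAt).prodMk ((hv' s).hasDerivAt)
  have hc : HasDerivAt (fun t => F1 (u t, v t))
      ((fderiv ℝ F1 (u s, v s)) (deriv u s, deriv v s)) s :=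
    (hdF1 _ (hmem s)).comp_hasDerivAt s (hγ s)
  have hα2 : deriv (deriv (fun t => φ (u t) (v t))) s =
      (fderiv ℝ F1 (u s, v s)) (deriv u s, deriv v s) (deriv u s, deriv v s)
        + F1 (u s, v s) (deriv (deriv u) s, deriv (deriv v) s) := by
    rw [hα1']
    exact (hc.clm_apply hw).deriv
  -- symmetry of second derivative
  have hsymm : ∀ w z : ℝ × ℝ, fderiv ℝ F1 (u s, v s) w z = fderiv ℝ F1 (u s, v s) z w := by
    intro w z
    apply second_derivative_symmetric_of_eventually (f := Φ) ?_ (hdF1 _ (hmem s))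
    filter_upwards [hU.mem_nhds (hmem s)] with y hy using hd y hy
  -- derivatives of inner products of first partials
  have hFw : ∀ w : ℝ × ℝ, HasFDerivAt (fun q => F1 q w)
      ((ContinuousLinearMap.apply ℝ E3 w).comp (fderiv ℝ F1 (u s, v s))) (u s, v s) :=
    fun w => (ContinuousLinearMap.apply ℝ E3 w).hasFDerivAt.comp _ (hdF1 _ (hmem s))
  have hJ : ∀ w z m : ℝ × ℝ,
      fderiv ℝ (fun q => (⟪F1 q w, F1 q z⟫ : ℝ)) (u s, v s) m =
        ⟪fderiv ℝ F1 (u s, v s) m w, F1 (u s, v s) z⟫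
          + ⟪F1 (u s, v s) w, fderiv ℝ F1 (u s, v s) m z⟫ := by
    intro w z m
    rw [((hFw w).inner ℝ (hFw z)).fderiv]
    simp only [ContinuousLinearMap.comp_apply, fderivInnerCLM_apply,
      ContinuousLinearMap.prod_apply, ContinuousLinearMap.apply_apply]
    exact add_comm _ _
  -- intrinsic identifications
  have hEloc : fderiv ℝ (fun q : ℝ × ℝ => fE φ q.1 q.2) (u s, v s) =
      fderiv ℝ (fun q => (⟪F1 q (1, 0), F1 q (1, 0)⟫ : ℝ)) (u s, v s) :=
    Filter.EventuallyEq.fderiv_eq (by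
      filter_upwards [hU.mem_nhds (hmem s)] with q hq
      rw [fE, hpdu q.1 q.2 hq])
  have hFloc : fderiv ℝ (fun q : ℝ × ℝ => fF φ q.1 q.2) (u s, v s) =
      fderiv ℝ (fun q => (⟪F1 q (1, 0), F1 q (0, 1)⟫ : ℝ)) (u s, v s) :=
    Filter.EventuallyEq.fderiv_eq (by
      filter_upwards [hU.mem_nhds (hmem s)] with q hq
      rw [fF, hpdu q.1 q.2 hq, hpdv q.1 q.2 hq])
  have hGloc : fderiv ℝ (fun q : ℝ × ℝ => fG φ q.1 q.2) (u s, v s) =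
      fderiv ℝ (fun q => (⟪F1 q (0, 1), F1 q (0, 1)⟫ : ℝ)) (u s, v s) :=
    Filter.EventuallyEq.fderiv_eq (by
      filter_upwards [hU.mem_nhds (hmem s)] with q hq
      rw [fG, hpdv q.1 q.2 hq])
  -- notation
  set Xu : E3 := F1 (u s, v s) (1, 0) with hXu
  set Xv : E3 := F1 (u s, v s) (0, 1) with hXv
  set H : ℝ × ℝ → ℝ × ℝ → E3 := fun w z => fderiv ℝ F1 (u s, v s) w z with hH
  set a : ℝ := deriv u s
  set b : ℝ := deriv v s
  set a2 : ℝ := deriv (deriv u) s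
  set b2 : ℝ := deriv (deriv v) s
  set dE1 : ℝ := fderiv ℝ (fun q : ℝ × ℝ => fE φ q.1 q.2) (u s, v s) (1, 0) with hdE1
  set dE2 : ℝ := fderiv ℝ (fun q : ℝ × ℝ => fE φ q.1 q.2) (u s, v s) (0, 1) with hdE2
  set dF1 : ℝ := fderiv ℝ (fun q : ℝ × ℝ => fF φ q.1 q.2) (u s, v s) (1, 0) with hdF1'
  set dF2 : ℝ := fderiv ℝ (fun q : ℝ × ℝ => fF φ q.1 q.2) (u s, v s) (0, 1) with hdF2
  set dG1 : ℝ := fderiv ℝ (fun q : ℝ × ℝ => fG φ q.1 q.2) (u s, v s) (1, 0) with hdG1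
  set dG2 : ℝ := fderiv ℝ (fun q : ℝ × ℝ => fG φ q.1 q.2) (u s, v s) (0, 1) with hdG2
  have eE1 : dE1 = ⟪H (1,0) (1,0), Xu⟫ + ⟪Xu, H (1,0) (1,0)⟫ := by
    rw [hdE1, hEloc]; exact hJ _ _ _
  have eE2 : dE2 = ⟪H (0,1) (1,0), Xu⟫ + ⟪Xu, H (0,1) (1,0)⟫ := by
    rw [hdE2, hEloc]; exact hJ _ _ _
  have eF1 : dF1 = ⟪H (1,0) (1,0), Xv⟫ + ⟪Xu, H (1,0) (0,1)⟫ := by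
    rw [hdF1', hFloc]; exact hJ _ _ _
  have eF2 : dF2 = ⟪H (0,1) (1,0), Xv⟫ + ⟪Xu, H (0,1) (0,1)⟫ := by
    rw [hdF2, hFloc]; exact hJ _ _ _
  have eG1 : dG1 = ⟪H (1,0) (0,1), Xv⟫ + ⟪Xv, H (1,0) (0,1)⟫ := by
    rw [hdG1, hGloc]; exact hJ _ _ _
  have eG2 : dG2 = ⟪H (0,1) (0,1), Xv⟫ + ⟪Xv, H (0,1) (0,1)⟫ := by
    rw [hdG2, hGloc]; exact hJ _ _ _
  -- the six second-derivative inner products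
  have hsym12 : H (1,0) (0,1) = H (0,1) (1,0) := hsymm _ _
  rw [hsym12] at eF1 eG1
  have h111 : ⟪H (1,0) (1,0), Xu⟫ = dE1 / 2 := by
    have := real_inner_comm Xu (H (1,0) (1,0)); linarith [eE1]
  have h121 : ⟪H (0,1) (1,0), Xu⟫ = dE2 / 2 := by
    have := real_inner_comm Xu (H (0,1) (1,0)); linarith [eE2]
  have h221 : ⟪H (0,1) (0,1), Xu⟫ = dF2 - dG1 / 2 := by
    have h1 := real_inner_comm Xu (H (0,1) (0,1))
    have h2 := real_inner_comm Xv (H (0,1) (1,0))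
    linarith [eF2, eG1]
  have h112 : ⟪H (1,0) (1,0), Xv⟫ = dF1 - dE2 / 2 := by
    have h1 := real_inner_comm Xu (H (0,1) (1,0))
    linarith [eF1, eE2]
  have h122 : ⟪H (0,1) (1,0), Xv⟫ = dG1 / 2 := by
    have := real_inner_comm Xv (H (0,1) (1,0)); linarith [eG1]
  have h222 : ⟪H (0,1) (0,1), Xv⟫ = dG2 / 2 := by
    have := real_inner_comm Xv (H (0,1) (0,1)); linarith [eG2]
  -- values of first fundamental form
  have hEval : fE φ (u s) (v s) = ⟪Xu, Xu⟫ := by rw [fE, hpdu _ _ (hmem s)]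
  have hFval : fF φ (u s) (v s) = ⟪Xu, Xv⟫ := by rw [fF, hpdu _ _ (hmem s), hpdv _ _ (hmem s)]
  have hGval : fG φ (u s) (v s) = ⟪Xv, Xv⟫ := by rw [fG, hpdv _ _ (hmem s)]
  have commE : (⟪Xv, Xu⟫ : ℝ) = ⟪Xu, Xv⟫ := real_inner_comm _ _
  -- decomposition of vectors
  have hdec : ∀ c d : ℝ, ((c, d) : ℝ × ℝ) = c • ((1:ℝ), (0:ℝ)) + d • ((0:ℝ), (1:ℝ)) := by
    intro c d; simp [Prod.ext_iff]
  have expand1 : ∀ c d : ℝ, F1 (u s, v s) (c, d) = c • Xu + d • Xv := by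
    intro c d; rw [hdec c d, map_add, map_smul, map_smul]
  have expand2 : (fderiv ℝ F1 (u s, v s)) (a, b) (a, b) =
      (a*a) • H (1,0) (1,0) + (a*b) • H (0,1) (1,0) + (a*b) • H (0,1) (1,0)
        + (b*b) • H (0,1) (0,1) := by
    rw [hdec a b, map_add, map_smul, map_smul]
    simp only [ContinuousLinearMap.add_apply, ContinuousLinearMap.smul_apply, map_add, map_smul]
    rw [show (fderiv ℝ F1 (u s, v s)) (1,0) (0,1) = H (1,0) (0,1) from rfl, hsym12]
    module
  have d1 : deriv (fun t => φ (u t) (v t)) s = a • Xu + b • Xv := by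
    rw [hα1']; exact expand1 a b
  refine ⟨?_, ?_, ?_, ?_⟩
  · rw [hpdu _ _ (hmem s), d1]
    simp only [inner_add_left, real_inner_smul_left]
    linear_combination a * hEval.symm + b * commE + b * hFval.symm
  · rw [hpdv _ _ (hmem s), d1]
    simp only [inner_add_left, real_inner_smul_left]
    linear_combination a * hFval.symm + b * hGval.symm
  · rw [hpdu _ _ (hmem s), hα2, expand2, expand1]
    simp only [inner_add_left, real_inner_smul_left]
    linear_combination (a*a) * h111 + (2*a*b) * h121 + (b*b) * h221
      + a2 * hEval.symm + b2 * commE + b2 * hFval.symm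
  · rw [hpdv _ _ (hmem s), hα2, expand2, expand1]
    simp only [inner_add_left, real_inner_smul_left]
    linear_combination (a*a) * h112 + (2*a*b) * h122 + (b*b) * h222
      + a2 * hFval.symm + b2 * hGval.symm

/-- deviation of the components of corresponding normal curves
along the unit surface normals under an isometry. -/
theorem stmt12 (U : Set (ℝ × ℝ)) (hU : IsOpen U) (φ ψ : ℝ → ℝ → E3)
    (hφ : ContDiffOn ℝ (⊤ : ℕ∞) (fun p : ℝ × ℝ => φ p.1 p.2) U)
    (hψ : ContDiffOn ℝ (⊤ : ℕ∞) (fun p : ℝ × ℝ => ψ p.1 p.2) U)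
    (hreg : ∀ p ∈ U, cross3 (pdu φ p.1 p.2) (pdv φ p.1 p.2) ≠ 0)
    (hreg' : ∀ p ∈ U, cross3 (pdu ψ p.1 p.2) (pdv ψ p.1 p.2) ≠ 0)
    (hE : ∀ p ∈ U, fE φ p.1 p.2 = fE ψ p.1 p.2)
    (hF : ∀ p ∈ U, fF φ p.1 p.2 = fF ψ p.1 p.2)
    (hG : ∀ p ∈ U, fG φ p.1 p.2 = fG ψ p.1 p.2)
    (u v : ℝ → ℝ) (hu : ContDiff ℝ (⊤ : ℕ∞) u) (hv : ContDiff ℝ (⊤ : ℕ∞) v)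
    (hmem : ∀ s : ℝ, (u s, v s) ∈ U)
    (α β : ℝ → E3)
    (hα : α = fun s => φ (u s) (v s)) (hβ : β = fun s => ψ (u s) (v s))
    (hunit : ∀ s : ℝ, ‖deriv α s‖ = 1) (hunit' : ∀ s : ℝ, ‖deriv β s‖ = 1)
    (κ lam mu : ℝ → ℝ) (hκpos : ∀ s : ℝ, 0 < κ s)
    (hκα : ∀ s : ℝ, ‖deriv (deriv α) s‖ = κ s)
    (hκβ : ∀ s : ℝ, ‖deriv (deriv β) s‖ = κ s)
    (hnc : ∀ s : ℝ, α s = lam s • ((κ s)⁻¹ • deriv (deriv α) s) +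
      mu s • cross3 (deriv α s) ((κ s)⁻¹ • deriv (deriv α) s))
    (hnc' : ∀ s : ℝ, β s = lam s • ((κ s)⁻¹ • deriv (deriv β) s) +
      mu s • cross3 (deriv β s) ((κ s)⁻¹ • deriv (deriv β) s)) :
    ∀ s : ℝ,
      ⟪β s, Nvec ψ (u s) (v s)⟫ - ⟪α s, Nvec φ (u s) (v s)⟫ =
        (lam s / κ s) *
          (⟪deriv (deriv β) s, Nvec ψ (u s) (v s)⟫ - ⟪deriv (deriv α) s, Nvec φ (u s) (v s)⟫) := by
  
  subst hα; subst hβ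
  intro s
  obtain ⟨k1, k2, k3, k4⟩ := key U hU φ hφ u v hu hv hmem s
  obtain ⟨l1, l2, l3, l4⟩ := key U hU ψ hψ u v hu hv hmem s
  have hEp : fE φ (u s) (v s) = fE ψ (u s) (v s) := hE _ (hmem s)
  have hFp : fF φ (u s) (v s) = fF ψ (u s) (v s) := hF _ (hmem s)
  have hGp : fG φ (u s) (v s) = fG ψ (u s) (v s) := hG _ (hmem s)
  have hEd : fderiv ℝ (fun q : ℝ × ℝ => fE φ q.1 q.2) (u s, v s) =
      fderiv ℝ (fun q : ℝ × ℝ => fE ψ q.1 q.2) (u s, v s) :=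
    Filter.EventuallyEq.fderiv_eq
      (by filter_upwards [hU.mem_nhds (hmem s)] with q hq using hE q hq)
  have hFd : fderiv ℝ (fun q : ℝ × ℝ => fF φ q.1 q.2) (u s, v s) =
      fderiv ℝ (fun q : ℝ × ℝ => fF ψ q.1 q.2) (u s, v s) :=
    Filter.EventuallyEq.fderiv_eq
      (by filter_upwards [hU.mem_nhds (hmem s)] with q hq using hF q hq)
  have hGd : fderiv ℝ (fun q : ℝ × ℝ => fG φ q.1 q.2) (u s, v s) =
      fderiv ℝ (fun q : ℝ × ℝ => fG ψ q.1 q.2) (u s, v s) :=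
    Filter.EventuallyEq.fderiv_eq
      (by filter_upwards [hU.mem_nhds (hmem s)] with q hq using hG q hq)
  have hI1 : ⟪deriv (fun t => φ (u t) (v t)) s, pdu φ (u s) (v s)⟫ =
      ⟪deriv (fun t => ψ (u t) (v t)) s, pdu ψ (u s) (v s)⟫ := by
    rw [k1, l1, hEp, hFp]
  have hI2 : ⟪deriv (fun t => φ (u t) (v t)) s, pdv φ (u s) (v s)⟫ =
      ⟪deriv (fun t => ψ (u t) (v t)) s, pdv ψ (u s) (v s)⟫ := by
    rw [k2, l2, hFp, hGp]
  have hI3 : ⟪deriv (deriv (fun t => φ (u t) (v t))) s, pdu φ (u s) (v s)⟫ =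
      ⟪deriv (deriv (fun t => ψ (u t) (v t))) s, pdu ψ (u s) (v s)⟫ := by
    rw [k3, l3, hEp, hFp, hEd, hFd, hGd]
  have hI4 : ⟪deriv (deriv (fun t => φ (u t) (v t))) s, pdv φ (u s) (v s)⟫ =
      ⟪deriv (deriv (fun t => ψ (u t) (v t))) s, pdv ψ (u s) (v s)⟫ := by
    rw [k4, l4, hFp, hGp, hEd, hFd, hGd]
  have hsq : ∀ χ : ℝ → ℝ → E3,
      ‖cross3 (pdu χ (u s) (v s)) (pdv χ (u s) (v s))‖ =
        Real.sqrt (fE χ (u s) (v s) * fG χ (u s) (v s) -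
          fF χ (u s) (v s) * fF χ (u s) (v s)) := by
    intro χ
    have h2 : (⟪cross3 (pdu χ (u s) (v s)) (pdv χ (u s) (v s)),
        cross3 (pdu χ (u s) (v s)) (pdv χ (u s) (v s))⟫ : ℝ) =
        fE χ (u s) (v s) * fG χ (u s) (v s) - fF χ (u s) (v s) * fF χ (u s) (v s) := by
      rw [lagrange, fE, fF, fG, real_inner_comm (pdv χ (u s) (v s)) (pdu χ (u s) (v s))]
    rw [← h2, real_inner_self_eq_norm_mul_norm, Real.sqrt_mul_self (norm_nonneg _)]
  have hnorm : ‖cross3 (pdu φ (u s) (v s)) (pdv φ (u s) (v s))‖ =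
      ‖cross3 (pdu ψ (u s) (v s)) (pdv ψ (u s) (v s))‖ := by
    rw [hsq φ, hsq ψ, hEp, hFp, hGp]
  have hT : ⟪cross3 (deriv (fun t => φ (u t) (v t)) s)
        (deriv (deriv (fun t => φ (u t) (v t))) s), Nvec φ (u s) (v s)⟫ =
      ⟪cross3 (deriv (fun t => ψ (u t) (v t)) s)
        (deriv (deriv (fun t => ψ (u t) (v t))) s), Nvec ψ (u s) (v s)⟫ := by
    rw [Nvec, Nvec, real_inner_smul_right, real_inner_smul_right, lagrange, lagrange,
      hnorm, hI1, hI2, hI3, hI4]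
  have hκ : κ s ≠ 0 := (hκpos s).ne'
  rw [hnc s, hnc' s]
  simp only [inner_add_left, real_inner_smul_left, cross3_smul_right]
  rw [hT]
  field_simp
  ring
end
end
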